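/- arXiv:2012.08590 — 4 statements merged into one kernel-verified Lean document; each statement's English description precedes it below -/
import Mathlib

section
/- For every tree T on at least 2 vertices, the mixed metric dimension of T equals the number of leaves of T. -/
namespace ThetaMixed

open SimpleGraph

variable {V : Type*}

/-- Distance from a vertex to an (unordered) pair of vertices:
`d(s, {x,y}) = min (d s x) (d s y)`. -/
noncomputable def edist (G : SimpleGraph V) (s : V) (e : Sym2 V) : ℕ :=
  Sym2.lift ⟨fun x y => min (G.dist s x) (G.dist s y), fun x y => min_comm _ _⟩ e

/-- Distance from a vertex to a mixed element (a vertex or an edge). -/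
noncomputable def mdist (G : SimpleGraph V) (s : V) : V ⊕ Sym2 V → ℕ :=
  Sum.elim (G.dist s) (edist G s)

/-- A mixed element of `G`: either a vertex, or an edge of `G`. -/
def IsMixedElem (G : SimpleGraph V) : V ⊕ Sym2 V → Prop :=
  Sum.elim (fun _ => True) (· ∈ G.edgeSet)

/-- `S` is a mixed metric generator of `G` if every pair of distinct mixed elements
(vertices or edges) is distinguished by some vertex of `S`. -/
def IsMixedGenerator (G : SimpleGraph V) (S : Set V) : Prop :=
  ∀ x x' : V ⊕ Sym2 V, IsMixedElem G x → IsMixedElem G x' → x ≠ x' →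
    ∃ s ∈ S, mdist G s x ≠ mdist G s x'

/-- The mixed metric dimension: the least cardinality of a mixed metric generator. -/
noncomputable def mdim (G : SimpleGraph V) [Fintype V] : ℕ :=
  sInf {n | ∃ S : Finset V, S.card = n ∧ IsMixedGenerator G ↑S}

/-- The number of leaves (vertices of degree 1). -/
noncomputable def numLeaves (G : SimpleGraph V) [Fintype V] : ℕ :=
  letI := Classical.dec
  letI : DecidableRel G.Adj := fun _ _ => Classical.dec _
  Fintype.card {v : V // G.degree v = 1}

/-- A Theta decomposition of `G`: two distinct vertices `u, v` joined by three
internally vertex-disjoint (and pairwise edge-disjoint) paths which together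
cover all vertices and edges of `G`. -/
structure IsThetaDecomp (G : SimpleGraph V) (u v : V)
    (P₁ P₂ P₃ : G.Walk u v) : Prop where
  ne : u ≠ v
  isPath₁ : P₁.IsPath
  isPath₂ : P₂.IsPath
  isPath₃ : P₃.IsPath
  intDisj₁₂ : ∀ w ∈ P₁.support, w ∈ P₂.support → w = u ∨ w = v
  intDisj₁₃ : ∀ w ∈ P₁.support, w ∈ P₃.support → w = u ∨ w = v
  intDisj₂₃ : ∀ w ∈ P₂.support, w ∈ P₃.support → w = u ∨ w = v
  edgeDisj₁₂ : ∀ e ∈ P₁.edges, e ∉ P₂.edges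
  edgeDisj₁₃ : ∀ e ∈ P₁.edges, e ∉ P₃.edges
  edgeDisj₂₃ : ∀ e ∈ P₂.edges, e ∉ P₃.edges
  coverV : ∀ w : V, w ∈ P₁.support ∨ w ∈ P₂.support ∨ w ∈ P₃.support
  coverE : ∀ e ∈ G.edgeSet, e ∈ P₁.edges ∨ e ∈ P₂.edges ∨ e ∈ P₃.edges

/-- `G` is a Theta graph. -/
def IsTheta (G : SimpleGraph V) : Prop :=
  ∃ (u v : V) (P₁ P₂ P₃ : G.Walk u v), IsThetaDecomp G u v P₁ P₂ P₃

/-- The three path lengths pairwise differ by at most 1. -/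
def Balanced3 (a b c : ℕ) : Prop :=
  Nat.dist a b ≤ 1 ∧ Nat.dist a c ≤ 1 ∧ Nat.dist b c ≤ 1

/-- `G` is a balanced Theta graph. -/
def IsBalancedTheta (G : SimpleGraph V) : Prop :=
  ∃ (u v : V) (P₁ P₂ P₃ : G.Walk u v), IsThetaDecomp G u v P₁ P₂ P₃ ∧
    Balanced3 P₁.length P₂.length P₃.length

/-- `G` is an unbalanced Theta graph. -/
def IsUnbalancedTheta (G : SimpleGraph V) : Prop :=
  IsTheta G ∧ ¬ IsBalancedTheta G

end ThetaMixed


namespace ThetaMixed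

open SimpleGraph

section Helpers

variable {V : Type*} [DecidableEq V] {T : SimpleGraph V}

set_option linter.unusedSectionVars false
set_option linter.unusedVariables false

lemma edist_mk (G : SimpleGraph V) (s u v : V) :
    edist G s (s(u, v) : Sym2 V) = min (G.dist s u) (G.dist s v) := rfl

lemma tree_path_eq (hT : T.IsTree) {u v : V} (p q : T.Walk u v)
    (hp : p.IsPath) (hq : q.IsPath) : p = q :=
  congrArg Subtype.val (hT.IsAcyclic.path_unique ⟨p, hp⟩ ⟨q, hq⟩)

lemma path_length_eq_dist (hT : T.IsTree) {u v : V} (p : T.Walk u v) (hp : p.IsPath) :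
    p.length = T.dist u v := by
  obtain ⟨w, hw⟩ := hT.isConnected.exists_walk_length_eq_dist u v
  have h1 : T.dist u v ≤ p.length := SimpleGraph.dist_le p
  have h2 : w.bypass = p := tree_path_eq hT _ _ w.bypass_isPath hp
  have h3 : p.length ≤ T.dist u v := by
    rw [← h2, ← hw]; exact w.length_bypass_le
  omega

lemma exists_geodesic (hT : T.IsTree) (u v : V) :
    ∃ p : T.Walk u v, p.IsPath ∧ p.length = T.dist u v :=
  ⟨_, (Classical.choice (hT.isConnected u v)).bypass_isPath,
    path_length_eq_dist hT _ (Classical.choice (hT.isConnected u v)).bypass_isPath⟩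

/-- Unique parent: two neighbors of `a` that are both strictly closer to `r` coincide. -/
lemma unique_parent (hT : T.IsTree) {r a y y' : V} (hy : T.Adj a y) (hy' : T.Adj a y')
    (hd : T.dist r y + 1 = T.dist r a) (hd' : T.dist r y' + 1 = T.dist r a) : y = y' := by
  classical
  obtain ⟨p, hp, hl⟩ := exists_geodesic hT r y
  obtain ⟨p', hp', hl'⟩ := exists_geodesic hT r y'
  have ha : a ∉ p.support := by
    intro h
    have h1 := SimpleGraph.dist_le (p.takeUntil a h)
    have h2 := p.length_takeUntil_le h
    omega
  have ha' : a ∉ p'.support := by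
    intro h
    have h1 := SimpleGraph.dist_le (p'.takeUntil a h)
    have h2 := p'.length_takeUntil_le h
    omega
  have hq : (SimpleGraph.Walk.cons hy p.reverse).IsPath := by
    refine SimpleGraph.Walk.IsPath.cons ?_ ?_
    · exact (p.isPath_reverse_iff).mpr hp
    · simpa [SimpleGraph.Walk.support_reverse] using ha
  have hq' : (SimpleGraph.Walk.cons hy' p'.reverse).IsPath := by
    refine SimpleGraph.Walk.IsPath.cons ?_ ?_
    · exact (p'.isPath_reverse_iff).mpr hp'
    · simpa [SimpleGraph.Walk.support_reverse] using ha'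
  have heq := tree_path_eq hT _ _ hq hq'
  have h1 : (SimpleGraph.Walk.cons hy p.reverse).getVert 1
      = (SimpleGraph.Walk.cons hy' p'.reverse).getVert 1 := by rw [heq]
  simpa [SimpleGraph.Walk.getVert_cons_succ, SimpleGraph.Walk.getVert_zero] using h1

/-- For an edge `a ~ c` and any root `r`, the distances differ by exactly 1. -/
lemma dist_adj_cases (hT : T.IsTree) (r : V) {a c : V} (h : T.Adj a c) :
    T.dist r c = T.dist r a + 1 ∨ T.dist r a = T.dist r c + 1 := by
  classical
  obtain ⟨p, hp, hl⟩ := exists_geodesic hT r a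
  by_cases hc : c ∈ p.support
  · right
    have h1 : (p.takeUntil c hc).length = T.dist r c :=
      path_length_eq_dist hT _ (hp.takeUntil hc)
    have h2 : (p.dropUntil c hc).length = T.dist c a :=
      path_length_eq_dist hT _ (hp.dropUntil hc)
    have h3 : T.dist c a = 1 := SimpleGraph.dist_eq_one_iff_adj.mpr h.symm
    have h4 := congrArg SimpleGraph.Walk.length (p.take_spec hc)
    rw [SimpleGraph.Walk.length_append] at h4
    omega
  · left
    have hq : (SimpleGraph.Walk.cons h.symm p.reverse).IsPath := by
      refine SimpleGraph.Walk.IsPath.cons ?_ ?_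
      · exact (p.isPath_reverse_iff).mpr hp
      · simpa [SimpleGraph.Walk.support_reverse] using hc
    have h5 := path_length_eq_dist hT _ hq
    simp only [SimpleGraph.Walk.length_cons, SimpleGraph.Walk.length_reverse] at h5
    rw [SimpleGraph.dist_comm] at h5
    omega

lemma exists_adj [Fintype V] (hT : T.IsTree) (h2 : 2 ≤ Fintype.card V) (l : V) :
    ∃ y, T.Adj l y := by
  have : Nontrivial V := Fintype.one_lt_card_iff_nontrivial.mp h2
  obtain ⟨z, hz⟩ := exists_ne l
  obtain ⟨p⟩ := hT.isConnected l z
  cases p with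
  | nil => exact absurd rfl hz
  | cons h _ => exact ⟨_, h⟩

/-- Key lemma: there is a leaf `l` such that `w` lies on the geodesic from `l` to `t`. -/
lemma exists_leaf_through [Fintype V] (hT : T.IsTree) (h2 : 2 ≤ Fintype.card V) (w t : V) :
    ∃ l, (∃! y, T.Adj l y) ∧ T.dist l t = T.dist l w + T.dist w t := by
  classical
  have hconn := hT.isConnected
  set S : Finset V :=
    Finset.univ.filter (fun x => T.dist x t = T.dist x w + T.dist w t) with hSdef
  have hwS : w ∈ S := by
    simp [hSdef, SimpleGraph.dist_self]
  obtain ⟨l, hlS, hmax⟩ := S.exists_max_image (fun x => T.dist x t) ⟨w, hwS⟩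
  have hl : T.dist l t = T.dist l w + T.dist w t := by
    simpa [hSdef] using hlS
  have hlt : l ≠ t := by
    rintro rfl
    rw [SimpleGraph.dist_self] at hl
    have hw1 : T.dist l w = 0 := by omega
    have hwl : l = w := (hconn.dist_eq_zero_iff).mp hw1
    subst hwl
    have : Nontrivial V := Fintype.one_lt_card_iff_nontrivial.mp h2
    obtain ⟨z, hz⟩ := exists_ne l
    have hzS : z ∈ S := by simp [hSdef, SimpleGraph.dist_self]
    have := hmax z hzS
    rw [SimpleGraph.dist_self] at this
    exact hz ((hconn.dist_eq_zero_iff).mp (by omega))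
  refine ⟨l, ?_, hl⟩
  by_contra hne
  obtain ⟨y0, hy0⟩ := exists_adj hT h2 l
  have hex : ∃ y1, T.Adj l y1 ∧ y1 ≠ y0 := by
    by_contra hc
    push_neg at hc
    exact hne ⟨y0, hy0, fun z hz => hc z hz⟩
  obtain ⟨y1, hy1, hne01⟩ := hex
  have key : ∃ y, T.Adj l y ∧ T.dist t y = T.dist t l + 1 := by
    rcases dist_adj_cases hT t hy0 with h0 | h0
    · exact ⟨y0, hy0, h0⟩
    · rcases dist_adj_cases hT t hy1 with h1 | h1
      · exact ⟨y1, hy1, h1⟩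
      · exact absurd (unique_parent (r := t) hT hy1 hy0 (by omega) (by omega)) hne01
  obtain ⟨y, hy, hyd⟩ := key
  have hdyl : T.dist y l = 1 := SimpleGraph.dist_eq_one_iff_adj.mpr hy.symm
  have t1 : T.dist y w ≤ T.dist y l + T.dist l w := hconn.dist_triangle
  have t2 : T.dist y t ≤ T.dist y w + T.dist w t := hconn.dist_triangle
  have hyt : T.dist y t = T.dist l t + 1 := by
    have c1 : T.dist y t = T.dist t y := SimpleGraph.dist_comm
    have c2 : T.dist l t = T.dist t l := SimpleGraph.dist_comm
    omega
  have hyS : y ∈ S := by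
    simp only [hSdef, Finset.mem_filter, Finset.mem_univ, true_and]
    omega
  have := hmax y hyS
  omega

lemma leaf_resolves_vv [Fintype V] (hT : T.IsTree) (h2 : 2 ≤ Fintype.card V)
    {w w' : V} (h : w ≠ w') :
    ∃ l, (∃! y, T.Adj l y) ∧ T.dist l w ≠ T.dist l w' := by
  obtain ⟨l, hP, hd⟩ := exists_leaf_through hT h2 w w'
  have := hT.isConnected.pos_dist_of_ne h
  exact ⟨l, hP, by omega⟩

lemma leaf_resolves_ve_adj [Fintype V] (hT : T.IsTree) (h2 : 2 ≤ Fintype.card V)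
    (w : V) {u v : V} (hadj : T.Adj u v) :
    ∃ l, (∃! y, T.Adj l y) ∧ T.dist l w ≠ min (T.dist l u) (T.dist l v) := by
  have hconn := hT.isConnected
  by_cases hwu : w = u
  · subst hwu
    obtain ⟨l, hP, hd⟩ := exists_leaf_through hT h2 v w
    have h1 : T.dist v w = 1 := SimpleGraph.dist_eq_one_iff_adj.mpr hadj.symm
    exact ⟨l, hP, by omega⟩
  by_cases hwv : w = v
  · subst hwv
    obtain ⟨l, hP, hd⟩ := exists_leaf_through hT h2 u w
    have h1 : T.dist u w = 1 := SimpleGraph.dist_eq_one_iff_adj.mpr hadj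
    exact ⟨l, hP, by omega⟩
  have aux : ∀ a b : V, T.Adj a b → w ≠ a → T.dist w b = T.dist w a + 1 →
      ∃ l, (∃! y, T.Adj l y) ∧ T.dist l w ≠ min (T.dist l a) (T.dist l b) := by
    intro a b hab hwa hd
    obtain ⟨l, hP, hld⟩ := exists_leaf_through hT h2 w b
    have h1 : 1 ≤ T.dist w a := hconn.pos_dist_of_ne hwa
    have h2' : T.dist l b ≤ T.dist l a + T.dist a b := hconn.dist_triangle
    have h3 : T.dist a b = 1 := SimpleGraph.dist_eq_one_iff_adj.mpr hab
    exact ⟨l, hP, by omega⟩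
  rcases dist_adj_cases hT w hadj with h | h
  · exact aux u v hadj hwu h
  · obtain ⟨l, hP, hd⟩ := aux v u hadj.symm hwv h
    exact ⟨l, hP, by omega⟩

lemma leaf_resolves_ve [Fintype V] (hT : T.IsTree) (h2 : 2 ≤ Fintype.card V)
    (w : V) {e : Sym2 V} (he : e ∈ T.edgeSet) :
    ∃ l, (∃! y, T.Adj l y) ∧ T.dist l w ≠ edist T l e := by
  induction e using Sym2.ind with | _ u v =>
  obtain ⟨l, hP, hd⟩ := leaf_resolves_ve_adj hT h2 w ((SimpleGraph.mem_edgeSet T).mp he)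
  exact ⟨l, hP, by rw [edist_mk]; exact hd⟩

lemma sym2_exists_not_mem {e e' : Sym2 V} (hd : ¬ e.IsDiag) (hne : e ≠ e') :
    ∃ a, a ∈ e ∧ a ∉ e' := by
  induction e using Sym2.ind with | _ u v =>
  induction e' using Sym2.ind with | _ u' v' =>
  rw [Sym2.isDiag_iff_proj_eq] at hd
  by_contra hc
  push_neg at hc
  have hu := hc u (by simp)
  have hv := hc v (by simp)
  rw [Sym2.mem_iff] at hu hv
  apply hne
  rcases hu with rfl | rfl <;> rcases hv with rfl | rfl
  · exact absurd rfl hd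
  · rfl
  · exact Sym2.eq_swap
  · exact absurd rfl hd

lemma leaf_resolves_ee_core [Fintype V] (hT : T.IsTree) (h2 : 2 ≤ Fintype.card V)
    {a c b c' : V} (hac : T.Adj a c) (hbc' : T.Adj b c') (hbe : b ∉ (s(a, c) : Sym2 V)) :
    ∃ l, (∃! y, T.Adj l y) ∧
      min (T.dist l b) (T.dist l c') < min (T.dist l a) (T.dist l c) := by
  have hconn := hT.isConnected
  have hab : a ≠ b := by rintro rfl; exact hbe (by simp)
  obtain ⟨l, hP, hd⟩ := exists_leaf_through hT h2 b a
  have hD : 1 ≤ T.dist b a := hconn.pos_dist_of_ne (Ne.symm hab)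
  have hca : T.dist c a = 1 := SimpleGraph.dist_eq_one_iff_adj.mpr hac.symm
  have t1 : T.dist l a ≤ T.dist l c + T.dist c a := hconn.dist_triangle
  by_cases hD2 : 2 ≤ T.dist b a
  · exact ⟨l, hP, by omega⟩
  · have hD1 : T.dist b a = 1 := by omega
    have hadj_ab : T.Adj b a := SimpleGraph.dist_eq_one_iff_adj.mp hD1
    have hbc : b ≠ c := by rintro rfl; exact hbe (by simp)
    rcases dist_adj_cases hT l hac with h | h
    · exact ⟨l, hP, by omega⟩
    · exact absurd (unique_parent (r := l) hT hadj_ab.symm hac (by omega) (by omega)) hbc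

lemma leaf_resolves_ee [Fintype V] (hT : T.IsTree) (h2 : 2 ≤ Fintype.card V)
    {e e' : Sym2 V} (he : e ∈ T.edgeSet) (he' : e' ∈ T.edgeSet) (hne : e ≠ e') :
    ∃ l, (∃! y, T.Adj l y) ∧ edist T l e ≠ edist T l e' := by
  obtain ⟨a, hae, hae'⟩ := sym2_exists_not_mem (SimpleGraph.not_isDiag_of_mem_edgeSet T he) hne
  obtain ⟨b, hbe', hbe⟩ :=
    sym2_exists_not_mem (SimpleGraph.not_isDiag_of_mem_edgeSet T he') hne.symm
  obtain ⟨c, rfl⟩ := Sym2.mem_iff_exists.mp hae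
  obtain ⟨c', rfl⟩ := Sym2.mem_iff_exists.mp hbe'
  have hac : T.Adj a c := (SimpleGraph.mem_edgeSet T).mp he
  have hbc' : T.Adj b c' := (SimpleGraph.mem_edgeSet T).mp he'
  obtain ⟨l, hP, hd⟩ := leaf_resolves_ee_core hT h2 hac hbc' hbe
  exact ⟨l, hP, by rw [edist_mk, edist_mk]; omega⟩

lemma degree_eq_one_iff {G : SimpleGraph V} {v : V} [Fintype (G.neighborSet v)] :
    G.degree v = 1 ↔ ∃! y, G.Adj v y := by
  have hdeg : G.degree v = (G.neighborFinset v).card := rfl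
  rw [hdeg, Finset.card_eq_one]
  constructor
  · rintro ⟨a, ha⟩
    have hmem : ∀ z, z ∈ G.neighborFinset v ↔ z = a := by
      intro z; rw [ha, Finset.mem_singleton]
    refine ⟨a, ?_, fun z hz => ?_⟩
    · have := (hmem a).mpr rfl
      simpa [SimpleGraph.mem_neighborFinset] using this
    · exact (hmem z).mp (by simpa [SimpleGraph.mem_neighborFinset] using hz)
  · rintro ⟨a, ha, hu⟩
    refine ⟨a, ?_⟩
    ext z
    simp only [SimpleGraph.mem_neighborFinset, Finset.mem_singleton]
    exact ⟨fun hz => hu z hz, fun hz => hz ▸ ha⟩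

end Helpers


/-- For every tree `T` on at least 2 vertices, the mixed metric dimension of `T`
equals the number of leaves of `T`. -/
theorem mdim_tree {V : Type*} [Fintype V] (T : SimpleGraph V)
    (hT : T.IsTree) (h2 : 2 ≤ Fintype.card V) :
    mdim T = numLeaves T := by
  classical
  have hconn := hT.isConnected
  set L : Finset V := Finset.univ.filter (fun v => ∃! y, T.Adj v y) with hLdef
  have hmemL : ∀ l, (∃! y, T.Adj l y) → l ∈ (L : Set V) := fun l h =>
    Finset.mem_coe.mpr (Finset.mem_filter.mpr ⟨Finset.mem_univ l, h⟩)
  have hgen : IsMixedGenerator T ↑L := by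
    rintro (w | e) (w' | e') hx hx' hne
    · have hww : w ≠ w' := by simpa using hne
      obtain ⟨l, hP, hd⟩ := leaf_resolves_vv hT h2 hww
      exact ⟨l, hmemL l hP, by simpa [mdist] using hd⟩
    · obtain ⟨l, hP, hd⟩ := leaf_resolves_ve hT h2 w (hx' : e' ∈ T.edgeSet)
      exact ⟨l, hmemL l hP, by simpa [mdist] using hd⟩
    · obtain ⟨l, hP, hd⟩ := leaf_resolves_ve hT h2 w' (hx : e ∈ T.edgeSet)
      exact ⟨l, hmemL l hP, by simpa [mdist] using hd.symm⟩
    · have hee : e ≠ e' := by simpa using hne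
      obtain ⟨l, hP, hd⟩ :=
        leaf_resolves_ee hT h2 (hx : e ∈ T.edgeSet) (hx' : e' ∈ T.edgeSet) hee
      exact ⟨l, hmemL l hP, by simpa [mdist] using hd⟩
  have hsub : ∀ S : Finset V, IsMixedGenerator T ↑S → L ⊆ S := by
    intro S hS v hv
    have hP : ∃! y, T.Adj v y := (Finset.mem_filter.mp hv).2
    obtain ⟨u, hu, huniq⟩ := hP
    have hedge : (s(u, v) : Sym2 V) ∈ T.edgeSet := (SimpleGraph.mem_edgeSet T).mpr hu.symm
    obtain ⟨s, hsS, hd⟩ := hS (Sum.inl u) (Sum.inr s(u, v)) trivial hedge (by simp)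
    have hd' : T.dist s u ≠ min (T.dist s u) (T.dist s v) := by
      simpa [mdist, edist_mk] using hd
    have hlt : T.dist s v < T.dist s u := by omega
    have hsv : s = v := by
      by_contra hsv
      obtain ⟨p, hp, hl⟩ := exists_geodesic hT v s
      cases p with
      | nil => exact hsv rfl
      | cons h q =>
        have hq : T.dist u s ≤ q.length := by
          rw [← huniq _ h]; exact SimpleGraph.dist_le q
        rw [SimpleGraph.Walk.length_cons] at hl
        have c1 : T.dist s u = T.dist u s := SimpleGraph.dist_comm
        have c2 : T.dist s v = T.dist v s := SimpleGraph.dist_comm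
        omega
    exact hsv ▸ hsS
  have hnum : numLeaves T = L.card := by
    unfold numLeaves
    rw [Fintype.card_subtype]
    congr 1
    ext v
    simp only [Finset.mem_filter, Finset.mem_univ, true_and, hLdef]
    exact degree_eq_one_iff
  rw [hnum]
  unfold mdim
  apply le_antisymm
  · exact Nat.sInf_le ⟨L, rfl, hgen⟩
  · refine le_csInf ⟨L.card, L, rfl, hgen⟩ ?_
    rintro n ⟨S, rfl, hS⟩
    exact Finset.card_le_card (hsub S hS)

end ThetaMixed
end

section
/- Let G be a balanced Theta graph with the two vertices u and v of degree 3, and let S be a set of exactly 3 vertices containing precisely one internal vertex from each of the three internally disjoint u–v paths of G. Then S is not a mixed metric generator of G. -/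
namespace ThetaMixed

open SimpleGraph Walk

variable {V : Type*} {G : SimpleGraph V} {u v : V} {P₁ P₂ P₃ : G.Walk u v}


lemma getVert_mem_support' (W : G.Walk u v) {n : ℕ} (hn : n ≤ W.length) :
    W.getVert n ∈ W.support :=
  Walk.mem_support_iff_exists_getVert.mpr ⟨n, rfl, hn⟩

lemma getVert_inj' {W : G.Walk u v} (hW : W.IsPath) :
    ∀ {m n : ℕ}, m ≤ W.length → n ≤ W.length → W.getVert m = W.getVert n → m = n := by
  induction W with
  | nil =>
    intro m n hm hn _
    simp only [Walk.length_nil] at hm hn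
    omega
  | cons h p ih =>
    intro m n hm hn he
    rw [Walk.cons_isPath_iff] at hW
    match m, n with
    | 0, 0 => rfl
    | 0, n+1 =>
      exfalso
      apply hW.2
      rw [Walk.getVert_cons_succ] at he
      have h0 : (Walk.cons h p).getVert 0 = _ := Walk.getVert_zero _
      rw [h0] at he
      exact Walk.mem_support_iff_exists_getVert.mpr ⟨n, he.symm, by simpa using hn⟩
    | m+1, 0 =>
      exfalso
      apply hW.2
      rw [Walk.getVert_cons_succ] at he
      have h0 : (Walk.cons h p).getVert 0 = _ := Walk.getVert_zero _
      rw [h0] at he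
      exact Walk.mem_support_iff_exists_getVert.mpr ⟨m, he, by simpa using hm⟩
    | m+1, n+1 =>
      rw [Walk.getVert_cons_succ, Walk.getVert_cons_succ] at he
      have := ih hW.1 (by simpa using hm) (by simpa using hn) he
      omega

lemma exists_walk_from' (W : G.Walk u v) (n : ℕ) (hn : n ≤ W.length) :
    ∃ p : G.Walk (W.getVert n) v, p.length = W.length - n ∧
      ∀ k, p.getVert k = W.getVert (n + k) := by
  induction W generalizing n with
  | nil => exact ⟨Walk.nil, by simp, fun k => rfl⟩
  | cons h p ih =>
    match n with
    | 0 => exact ⟨Walk.cons h p, rfl, fun k => congrArg _ (Nat.zero_add k).symm⟩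
    | n+1 =>
      obtain ⟨q, hq1, hq2⟩ := ih n (by simpa using hn)
      refine ⟨q, by exact hq1.trans (Nat.add_sub_add_right p.length 1 n).symm, fun k => ?_⟩
      have hv : (Walk.cons h p).getVert (n + 1 + k) = p.getVert (n + k) := by
        rw [Nat.add_right_comm, Walk.getVert_cons_succ]
      rw [hv]
      exact hq2 k

lemma exists_walk_to' (W : G.Walk u v) (n : ℕ) (hn : n ≤ W.length) :
    ∃ p : G.Walk u (W.getVert n), p.length = n := by
  induction W generalizing n with
  | nil =>
    have : n = 0 := by simpa using hn
    subst this
    exact ⟨Walk.nil, rfl⟩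
  | cons h p ih =>
    match n with
    | 0 => exact ⟨Walk.nil, rfl⟩
    | n+1 =>
      obtain ⟨q, hq⟩ := ih n (by simpa using hn)
      exact ⟨Walk.cons h q, by simp [hq]⟩

lemma dist_getVert_le' (W : G.Walk u v) {m n : ℕ} (hmn : m ≤ n) (hn : n ≤ W.length) :
    G.dist (W.getVert m) (W.getVert n) ≤ n - m := by
  obtain ⟨p, hp1, hp2⟩ := exists_walk_from' W m (hmn.trans hn)
  obtain ⟨q, hq⟩ := exists_walk_to' p (n - m) (by omega)
  have h2 : p.getVert (n - m) = W.getVert n := by rw [hp2]; congr 1; omega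
  rw [← h2]
  calc G.dist (W.getVert m) (p.getVert (n-m)) ≤ q.length := dist_le q
  _ = n - m := hq

lemma edge_getVert' (W : G.Walk u v) {e : Sym2 V} (he : e ∈ W.edges) :
    ∃ i, i < W.length ∧ e = s(W.getVert i, W.getVert (i+1)) := by
  induction W with
  | nil => simp at he
  | cons h p ih =>
    rw [Walk.edges_cons, List.mem_cons] at he
    rcases he with he | he
    · refine ⟨0, by simp, ?_⟩
      rw [he, Walk.getVert_zero, Walk.getVert_cons_succ, Walk.getVert_zero]
    · obtain ⟨i, hi, hie⟩ := ih he
      refine ⟨i+1, by simp only [Walk.length_cons]; omega, ?_⟩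
      rw [hie, Walk.getVert_cons_succ, Walk.getVert_cons_succ]

lemma dist_cross_le_u' (P Q : G.Walk u v) {m n : ℕ} (hm : m ≤ P.length) (hn : n ≤ Q.length) :
    G.dist (P.getVert m) (Q.getVert n) ≤ m + n := by
  obtain ⟨p, hp⟩ := exists_walk_to' P m hm
  obtain ⟨q, hq⟩ := exists_walk_to' Q n hn
  calc G.dist (P.getVert m) (Q.getVert n) ≤ (p.reverse.append q).length := dist_le _
  _ = m + n := by simp [hp, hq]

lemma dist_cross_le_v' (P Q : G.Walk u v) {m n : ℕ} (hm : m ≤ P.length) (hn : n ≤ Q.length) :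
    G.dist (P.getVert m) (Q.getVert n) ≤ (P.length - m) + (Q.length - n) := by
  obtain ⟨p, hp, -⟩ := exists_walk_from' P m hm
  obtain ⟨q, hq, -⟩ := exists_walk_from' Q n hn
  calc G.dist (P.getVert m) (Q.getVert n) ≤ (p.append q.reverse).length := dist_le _
  _ = (P.length - m) + (Q.length - n) := by simp [hp, hq]

lemma le_of_lipschitz' {f : V → ℕ} (hf : ∀ x y, G.Adj x y → f y ≤ f x + 1) :
    ∀ {x y : V} (p : G.Walk x y), f y ≤ f x + p.length := by
  intro x y p
  induction p with
  | nil => simp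
  | @cons a b c h q ih =>
    have := hf a b h
    simp only [Walk.length_cons]
    omega

lemma dist_formulas (P Q R : G.Walk u v)
    (hP : P.IsPath) (hQ : Q.IsPath) (hR : R.IsPath)
    (hPQ : ∀ w ∈ P.support, w ∈ Q.support → w = u ∨ w = v)
    (hQR : ∀ w ∈ Q.support, w ∈ R.support → w = u ∨ w = v)
    (hPR : ∀ w ∈ P.support, w ∈ R.support → w = u ∨ w = v)
    (hcovV : ∀ w : V, w ∈ P.support ∨ w ∈ Q.support ∨ w ∈ R.support)
    (hcovE : ∀ e ∈ G.edgeSet, e ∈ P.edges ∨ e ∈ Q.edges ∨ e ∈ R.edges)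
    (hbalQ : P.length ≤ Q.length + 1) (hbalR : P.length ≤ R.length + 1)
    {a : ℕ} (ha1 : 1 ≤ a) (ha2 : a + 1 ≤ P.length) :
    (∀ n ≤ P.length, G.dist (P.getVert a) (P.getVert n) = a - n + (n - a)) ∧
    (∀ n ≤ Q.length, G.dist (P.getVert a) (Q.getVert n)
        = min (a + n) ((P.length - a) + (Q.length - n))) := by
  classical
  have haP : a ≤ P.length := by omega
  set idx : G.Walk u v → V → ℕ := fun W w =>
    if h : w ∈ W.support then (Walk.mem_support_iff_exists_getVert.mp h).choose else 0
    with hidx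
  have idx_spec : ∀ (W : G.Walk u v) (w), w ∈ W.support →
      W.getVert (idx W w) = w ∧ idx W w ≤ W.length := by
    intro W w h
    simp only [hidx, dif_pos h]
    exact (Walk.mem_support_iff_exists_getVert.mp h).choose_spec
  set f : V → ℕ := fun w =>
    if w ∈ P.support then a - idx P w + (idx P w - a)
    else if w ∈ Q.support then min (a + idx Q w) ((P.length - a) + (Q.length - idx Q w))
    else min (a + idx R w) ((P.length - a) + (R.length - idx R w))
    with hfdef
  have hfP : ∀ n ≤ P.length, f (P.getVert n) = a - n + (n - a) := by
    intro n hn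
    have hmem := getVert_mem_support' P hn
    have hspec := idx_spec P _ hmem
    have hin : idx P (P.getVert n) = n := getVert_inj' hP hspec.2 hn hspec.1
    simp only [hfdef, if_pos hmem, hin]
  have hfQ : ∀ n ≤ Q.length, f (Q.getVert n)
      = min (a + n) ((P.length - a) + (Q.length - n)) := by
    intro n hn
    have hmem := getVert_mem_support' Q hn
    by_cases hp : Q.getVert n ∈ P.support
    · have hspec := idx_spec P _ hp
      rcases hPQ _ hp hmem with h | h
      · have hn0 : n = 0 := getVert_inj' hQ hn (Nat.zero_le _) (by rw [h, Walk.getVert_zero])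
        have hi0 : idx P (Q.getVert n) = 0 :=
          getVert_inj' hP hspec.2 (Nat.zero_le _ ) (by rw [hspec.1, h, Walk.getVert_zero])
        subst hn0
        simp only [hfdef, if_pos hp, hi0]
        omega
      · have hnl : n = Q.length := getVert_inj' hQ hn le_rfl (by rw [h, Walk.getVert_length])
        have hil : idx P (Q.getVert n) = P.length :=
          getVert_inj' hP hspec.2 le_rfl (by rw [hspec.1, h, Walk.getVert_length])
        subst hnl
        simp only [hfdef, if_pos hp, hil]
        omega
    · have hspec := idx_spec Q _ hmem
      have hin : idx Q (Q.getVert n) = n := getVert_inj' hQ hspec.2 hn hspec.1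
      simp only [hfdef, if_neg hp, if_pos hmem, hin]
  have hfR : ∀ n ≤ R.length, f (R.getVert n)
      = min (a + n) ((P.length - a) + (R.length - n)) := by
    intro n hn
    have hmem := getVert_mem_support' R hn
    by_cases hp : R.getVert n ∈ P.support
    · have hspec := idx_spec P _ hp
      rcases hPR _ hp hmem with h | h
      · have hn0 : n = 0 := getVert_inj' hR hn (Nat.zero_le _) (by rw [h, Walk.getVert_zero])
        have hi0 : idx P (R.getVert n) = 0 :=
          getVert_inj' hP hspec.2 (Nat.zero_le _ ) (by rw [hspec.1, h, Walk.getVert_zero])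
        subst hn0
        simp only [hfdef, if_pos hp, hi0]
        omega
      · have hnl : n = R.length := getVert_inj' hR hn le_rfl (by rw [h, Walk.getVert_length])
        have hil : idx P (R.getVert n) = P.length :=
          getVert_inj' hP hspec.2 le_rfl (by rw [hspec.1, h, Walk.getVert_length])
        subst hnl
        simp only [hfdef, if_pos hp, hil]
        omega
    · by_cases hq : R.getVert n ∈ Q.support
      · exfalso
        rcases hQR _ hq hmem with h | h
        · exact hp (by rw [h]; exact P.start_mem_support)
        · exact hp (by rw [h]; exact P.end_mem_support)
      · have hspec := idx_spec R _ hmem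
        have hin : idx R (R.getVert n) = n := getVert_inj' hR hspec.2 hn hspec.1
        simp only [hfdef, if_neg hp, if_neg hq, hin]
  have hlip : ∀ x y, G.Adj x y → f y ≤ f x + 1 := by
    intro x y hadj
    rcases hcovE s(x,y) (G.mem_edgeSet.mpr hadj) with h | h | h
    · obtain ⟨i, hi, hie⟩ := edge_getVert' P h
      rw [Sym2.eq_iff] at hie
      rcases hie with ⟨hx, hy⟩ | ⟨hx, hy⟩ <;> subst hx <;> subst hy
      · rw [hfP (i+1) (by omega), hfP i (by omega)]; omega
      · rw [hfP (i+1) (by omega), hfP i (by omega)]; omega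
    · obtain ⟨i, hi, hie⟩ := edge_getVert' Q h
      rw [Sym2.eq_iff] at hie
      rcases hie with ⟨hx, hy⟩ | ⟨hx, hy⟩ <;> subst hx <;> subst hy
      · rw [hfQ (i+1) (by omega), hfQ i (by omega)]; omega
      · rw [hfQ (i+1) (by omega), hfQ i (by omega)]; omega
    · obtain ⟨i, hi, hie⟩ := edge_getVert' R h
      rw [Sym2.eq_iff] at hie
      rcases hie with ⟨hx, hy⟩ | ⟨hx, hy⟩ <;> subst hx <;> subst hy
      · rw [hfR (i+1) (by omega), hfR i (by omega)]; omega
      · rw [hfR (i+1) (by omega), hfR i (by omega)]; omega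
  have hreach : ∀ w : V, G.Reachable (P.getVert a) w := by
    intro w
    have h1 : G.Reachable (P.getVert a) u := ⟨(exists_walk_to' P a haP).choose.reverse⟩
    rcases hcovV w with h | h | h
    · obtain ⟨n, hn, hnl⟩ := Walk.mem_support_iff_exists_getVert.mp h
      exact h1.trans (hn ▸ ⟨(exists_walk_to' P n hnl).choose⟩)
    · obtain ⟨n, hn, hnl⟩ := Walk.mem_support_iff_exists_getVert.mp h
      exact h1.trans (hn ▸ ⟨(exists_walk_to' Q n hnl).choose⟩)
    · obtain ⟨n, hn, hnl⟩ := Walk.mem_support_iff_exists_getVert.mp h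
      exact h1.trans (hn ▸ ⟨(exists_walk_to' R n hnl).choose⟩)
  have hlow : ∀ w : V, f w ≤ G.dist (P.getVert a) w := by
    intro w
    obtain ⟨p, hp⟩ := (hreach w).exists_walk_length_eq_dist
    have h1 := le_of_lipschitz' hlip p
    have h2 : f (P.getVert a) = 0 := by rw [hfP a haP]; omega
    omega
  constructor
  · intro n hn
    have hub : G.dist (P.getVert a) (P.getVert n) ≤ a - n + (n - a) := by
      rcases le_total a n with h | h
      · have := dist_getVert_le' P h hn
        omega
      · have := dist_getVert_le' P h haP
        rw [dist_comm] at this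
        omega
    have hlb := hlow (P.getVert n)
    rw [hfP n hn] at hlb
    omega
  · intro n hn
    have hub1 := dist_cross_le_u' P Q haP hn
    have hub2 := dist_cross_le_v' P Q haP hn
    have hlb := hlow (Q.getVert n)
    rw [hfQ n hn] at hlb
    omega



lemma IsThetaDecomp.swap12 (hT : IsThetaDecomp G u v P₁ P₂ P₃) :
    IsThetaDecomp G u v P₂ P₁ P₃ :=
  ⟨hT.ne, hT.isPath₂, hT.isPath₁, hT.isPath₃,
   fun w hw hw' => hT.intDisj₁₂ w hw' hw, hT.intDisj₂₃, hT.intDisj₁₃,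
   fun e he he' => hT.edgeDisj₁₂ e he' he, hT.edgeDisj₂₃, hT.edgeDisj₁₃,
   fun w => by rcases hT.coverV w with h|h|h <;> tauto,
   fun e he => by rcases hT.coverE e he with h|h|h <;> tauto⟩

lemma IsThetaDecomp.swap23 (hT : IsThetaDecomp G u v P₁ P₂ P₃) :
    IsThetaDecomp G u v P₁ P₃ P₂ :=
  ⟨hT.ne, hT.isPath₁, hT.isPath₃, hT.isPath₂,
   hT.intDisj₁₃, hT.intDisj₁₂, fun w hw hw' => hT.intDisj₂₃ w hw' hw,
   hT.edgeDisj₁₃, hT.edgeDisj₁₂, fun e he he' => hT.edgeDisj₂₃ e he' he,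
   fun w => by rcases hT.coverV w with h|h|h <;> tauto,
   fun e he => by rcases hT.coverE e he with h|h|h <;> tauto⟩

lemma Balanced3.swap12 {a b c : ℕ} (h : Balanced3 a b c) : Balanced3 b a c :=
  ⟨by rw [Nat.dist_comm]; exact h.1, h.2.2, h.2.1⟩

lemma Balanced3.swap23 {a b c : ℕ} (h : Balanced3 a b c) : Balanced3 a c b :=
  ⟨h.2.1, h.1, by rw [Nat.dist_comm]; exact h.2.2⟩

set_option maxHeartbeats 2000000 in
lemma main_sorted {s₁ s₂ s₃ : V} {a₁ a₂ a₃ : ℕ}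
    (hT : IsThetaDecomp G u v P₁ P₂ P₃)
    (hbal : Balanced3 P₁.length P₂.length P₃.length)
    (e₁ : P₁.getVert a₁ = s₁) (e₂ : P₂.getVert a₂ = s₂) (e₃ : P₃.getVert a₃ = s₃)
    (h1l : 1 ≤ a₁) (h1r : a₁ + 1 ≤ P₁.length)
    (h2l : 1 ≤ a₂) (h2r : a₂ + 1 ≤ P₂.length)
    (h3l : 1 ≤ a₃) (h3r : a₃ + 1 ≤ P₃.length)
    (hc12 : 2*a₁ + P₂.length ≤ 2*a₂ + P₁.length)
    (hc23 : 2*a₂ + P₃.length ≤ 2*a₃ + P₂.length) :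
    ¬ IsMixedGenerator G {s₁, s₂, s₃} := by
  subst e₁ e₂ e₃
  have hd : ∀ p q : ℕ, Nat.dist p q = p - q + (q - p) := fun _ _ => rfl
  have hb12 := hbal.1; have hb13 := hbal.2.1; have hb23 := hbal.2.2
  rw [hd] at hb12 hb13 hb23
  -- flipped disjointness
  have hd21 : ∀ w ∈ P₂.support, w ∈ P₁.support → w = u ∨ w = v :=
    fun w hw hw' => hT.intDisj₁₂ w hw' hw
  have hd31 : ∀ w ∈ P₃.support, w ∈ P₁.support → w = u ∨ w = v :=
    fun w hw hw' => hT.intDisj₁₃ w hw' hw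
  have hd32 : ∀ w ∈ P₃.support, w ∈ P₂.support → w = u ∨ w = v :=
    fun w hw hw' => hT.intDisj₂₃ w hw' hw
  have hcV12 : ∀ w : V, w ∈ P₁.support ∨ w ∈ P₂.support ∨ w ∈ P₃.support := hT.coverV
  have hcV13 : ∀ w : V, w ∈ P₁.support ∨ w ∈ P₃.support ∨ w ∈ P₂.support :=
    fun w => by rcases hT.coverV w with h|h|h <;> tauto
  have hcV21 : ∀ w : V, w ∈ P₂.support ∨ w ∈ P₁.support ∨ w ∈ P₃.support :=
    fun w => by rcases hT.coverV w with h|h|h <;> tauto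
  have hcV23 : ∀ w : V, w ∈ P₂.support ∨ w ∈ P₃.support ∨ w ∈ P₁.support :=
    fun w => by rcases hT.coverV w with h|h|h <;> tauto
  have hcV31 : ∀ w : V, w ∈ P₃.support ∨ w ∈ P₁.support ∨ w ∈ P₂.support :=
    fun w => by rcases hT.coverV w with h|h|h <;> tauto
  have hcV32 : ∀ w : V, w ∈ P₃.support ∨ w ∈ P₂.support ∨ w ∈ P₁.support :=
    fun w => by rcases hT.coverV w with h|h|h <;> tauto
  have hcE12 : ∀ e ∈ G.edgeSet, e ∈ P₁.edges ∨ e ∈ P₂.edges ∨ e ∈ P₃.edges := hT.coverE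
  have hcE13 : ∀ e ∈ G.edgeSet, e ∈ P₁.edges ∨ e ∈ P₃.edges ∨ e ∈ P₂.edges :=
    fun e he => by rcases hT.coverE e he with h|h|h <;> tauto
  have hcE21 : ∀ e ∈ G.edgeSet, e ∈ P₂.edges ∨ e ∈ P₁.edges ∨ e ∈ P₃.edges :=
    fun e he => by rcases hT.coverE e he with h|h|h <;> tauto
  have hcE23 : ∀ e ∈ G.edgeSet, e ∈ P₂.edges ∨ e ∈ P₃.edges ∨ e ∈ P₁.edges :=
    fun e he => by rcases hT.coverE e he with h|h|h <;> tauto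
  have hcE31 : ∀ e ∈ G.edgeSet, e ∈ P₃.edges ∨ e ∈ P₁.edges ∨ e ∈ P₂.edges :=
    fun e he => by rcases hT.coverE e he with h|h|h <;> tauto
  have hcE32 : ∀ e ∈ G.edgeSet, e ∈ P₃.edges ∨ e ∈ P₂.edges ∨ e ∈ P₁.edges :=
    fun e he => by rcases hT.coverE e he with h|h|h <;> tauto
  have F1 := dist_formulas P₁ P₂ P₃ hT.isPath₁ hT.isPath₂ hT.isPath₃
    hT.intDisj₁₂ hT.intDisj₂₃ hT.intDisj₁₃ hcV12 hcE12 (by omega) (by omega) h1l h1r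
  have F1' := dist_formulas P₁ P₃ P₂ hT.isPath₁ hT.isPath₃ hT.isPath₂
    hT.intDisj₁₃ hd32 hT.intDisj₁₂ hcV13 hcE13 (by omega) (by omega) h1l h1r
  have F2 := dist_formulas P₂ P₁ P₃ hT.isPath₂ hT.isPath₁ hT.isPath₃
    hd21 hT.intDisj₁₃ hT.intDisj₂₃ hcV21 hcE21 (by omega) (by omega) h2l h2r
  have F2' := dist_formulas P₂ P₃ P₁ hT.isPath₂ hT.isPath₃ hT.isPath₁
    hT.intDisj₂₃ hd31 hd21 hcV23 hcE23 (by omega) (by omega) h2l h2r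
  have F3 := dist_formulas P₃ P₁ P₂ hT.isPath₃ hT.isPath₁ hT.isPath₂
    hd31 hT.intDisj₁₂ hd32 hcV31 hcE31 (by omega) (by omega) h3l h3r
  have F3' := dist_formulas P₃ P₂ P₁ hT.isPath₃ hT.isPath₂ hT.isPath₁
    hd32 hd21 hd31 hcV32 hcE32 (by omega) (by omega) h3l h3r
  have D11 := F1.1
  have D12 := F1.2
  have D13 := F1'.2
  have D21 := F2.2
  have D22 := F2.1
  have D23 := F2'.2
  have D31 := F3.2
  have D32 := F3'.2
  have D33 := F3.1
  -- helper for distinctness of vertices across paths 1 and 3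
  have hcross : ∀ x y : ℕ, 1 ≤ x → x ≤ P₁.length → y + 1 ≤ P₃.length →
      P₁.getVert x ≠ P₃.getVert y := by
    intro x y hx1 hx2 hy h
    have hmem1 : P₁.getVert x ∈ P₁.support := getVert_mem_support' _ hx2
    have hmem3 : P₃.getVert y ∈ P₃.support :=
      getVert_mem_support' _ (show y ≤ P₃.length by omega)
    rcases hT.intDisj₁₃ _ hmem1 (h ▸ hmem3) with hh | hh
    · have := getVert_inj' hT.isPath₁ hx2 (Nat.zero_le _)
        (by rw [hh, Walk.getVert_zero])
      omega
    · rw [h] at hh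
      have := getVert_inj' hT.isPath₃ (m := y) (n := P₃.length)
        (by omega) le_rfl (by rw [hh, Walk.getVert_length])
      omega
  intro hgen
  rcases Nat.lt_trichotomy (2*a₁ + 2*a₃) (P₁.length + P₃.length) with hA | hC | hB
  · -- Case A : c₁ + c₃ ≤ -1, use s₁ and edge (s₁, next)
    have hA2 : 2*a₁ + 2*a₂ < P₁.length + P₂.length := by omega
    obtain ⟨s, hs, hne⟩ := hgen (Sum.inl (P₁.getVert a₁))
      (Sum.inr s(P₁.getVert a₁, P₁.getVert (a₁+1)))
      trivial
      (show s(P₁.getVert a₁, P₁.getVert (a₁+1)) ∈ G.edgeSet from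
        G.mem_edgeSet.mpr (P₁.adj_getVert_succ (by omega)))
      (by simp)
    simp only [Set.mem_insert_iff, Set.mem_singleton_iff] at hs
    apply hne
    simp only [mdist, edist, Sum.elim_inl, Sum.elim_inr, Sym2.lift_mk]
    rcases hs with rfl | rfl | rfl
    · rw [SimpleGraph.dist_self]
      simp
    · rw [D21 a₁ (by omega), D21 (a₁+1) (by omega)]
      omega
    · rw [D31 a₁ (by omega), D31 (a₁+1) (by omega)]
      omega
  · -- Case C : c₁ + c₃ = 0
    rcases Nat.eq_or_lt_of_le (show P₃.length ≤ 2*a₃ by omega) with hC0 | hCpos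
    · -- all cᵢ = 0 : use u and v
      obtain ⟨s, hs, hne⟩ := hgen (Sum.inl u) (Sum.inl v) trivial trivial
        (by simp [hT.ne])
      simp only [Set.mem_insert_iff, Set.mem_singleton_iff] at hs
      apply hne
      simp only [mdist, Sum.elim_inl]
      rcases hs with rfl | rfl | rfl
      · have hu := D11 0 (by omega)
        have hv := D11 P₁.length le_rfl
        rw [Walk.getVert_zero] at hu
        rw [Walk.getVert_length] at hv
        rw [hu, hv]
        omega
      · have hu := D22 0 (by omega)
        have hv := D22 P₂.length le_rfl
        rw [Walk.getVert_zero] at hu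
        rw [Walk.getVert_length] at hv
        rw [hu, hv]
        omega
      · have hu := D33 0 (by omega)
        have hv := D33 P₃.length le_rfl
        rw [Walk.getVert_zero] at hu
        rw [Walk.getVert_length] at hv
        rw [hu, hv]
        omega
    · -- c := c₃ > 0
      by_cases hpar : (P₂.length + P₃.length) % 2 = 0
      · -- even case : two vertices
        obtain ⟨p, hp⟩ : ∃ p, 2*a₃ + 2*a₂ = P₃.length + P₂.length + 2*p := by
          refine ⟨(2*a₃ + 2*a₂ - P₃.length - P₂.length)/2, by omega⟩
        obtain ⟨q, hq⟩ : ∃ q, 2*a₃ + P₂.length = P₃.length + 2*a₂ + 2*q := by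
          refine ⟨(2*a₃ + P₂.length - P₃.length - 2*a₂)/2, by omega⟩
        obtain ⟨s, hs, hne⟩ := hgen (Sum.inl (P₁.getVert (P₁.length - p)))
          (Sum.inl (P₃.getVert q)) trivial trivial
          (by
            simp only [ne_eq, Sum.inl.injEq]
            exact hcross _ _ (by omega) (by omega) (by omega))
        simp only [Set.mem_insert_iff, Set.mem_singleton_iff] at hs
        apply hne
        simp only [mdist, Sum.elim_inl]
        rcases hs with rfl | rfl | rfl
        · rw [D11 (P₁.length - p) (by omega), D13 q (by omega)]
          omega
        · rw [D21 (P₁.length - p) (by omega), D23 q (by omega)]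
          omega
        · rw [D31 (P₁.length - p) (by omega), D33 q (by omega)]
          omega
      · -- odd case : two edges
        obtain ⟨p, hp⟩ : ∃ p, 2*a₃ + 2*a₂ = P₃.length + P₂.length + 2*p + 1 := by
          refine ⟨(2*a₃ + 2*a₂ - P₃.length - P₂.length - 1)/2, by omega⟩
        obtain ⟨q, hq⟩ : ∃ q, 2*a₃ + P₂.length = P₃.length + 2*a₂ + 2*q + 1 := by
          refine ⟨(2*a₃ + P₂.length - P₃.length - 2*a₂ - 1)/2, by omega⟩
        obtain ⟨s, hs, hne⟩ := hgen
          (Sum.inr s(P₁.getVert (P₁.length - p - 1), P₁.getVert (P₁.length - p)))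
          (Sum.inr s(P₃.getVert q, P₃.getVert (q+1)))
          (show s(P₁.getVert (P₁.length - p - 1), P₁.getVert (P₁.length - p)) ∈ G.edgeSet by
            have h' := P₁.adj_getVert_succ (i := P₁.length - p - 1) (by omega)
            have hidx : P₁.length - p - 1 + 1 = P₁.length - p := by omega
            rw [hidx] at h'
            exact G.mem_edgeSet.mpr h')
          (show s(P₃.getVert q, P₃.getVert (q+1)) ∈ G.edgeSet from
            G.mem_edgeSet.mpr (P₃.adj_getVert_succ (by omega)))
          (by
            intro hABeq
            rw [Sum.inr.injEq, Sym2.eq_iff] at hABeq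
            rcases hABeq with ⟨h1, -⟩ | ⟨h1, -⟩
            · exact hcross _ _ (by omega) (by omega) (by omega) h1
            · exact hcross _ _ (by omega) (by omega) (by omega) h1)
        simp only [Set.mem_insert_iff, Set.mem_singleton_iff] at hs
        apply hne
        simp only [mdist, edist, Sum.elim_inr, Sym2.lift_mk]
        rcases hs with rfl | rfl | rfl
        · rw [D11 (P₁.length - p - 1) (by omega), D11 (P₁.length - p) (by omega),
            D13 q (by omega), D13 (q+1) (by omega)]
          omega
        · rw [D21 (P₁.length - p - 1) (by omega), D21 (P₁.length - p) (by omega),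
            D23 q (by omega), D23 (q+1) (by omega)]
          omega
        · rw [D31 (P₁.length - p - 1) (by omega), D31 (P₁.length - p) (by omega),
            D33 q (by omega), D33 (q+1) (by omega)]
          omega
  · -- Case B : c₁ + c₃ ≥ 1, use s₃ and edge (prev, s₃)
    have hB2 : 2*a₂ + 2*a₃ > P₂.length + P₃.length := by omega
    obtain ⟨s, hs, hne⟩ := hgen (Sum.inl (P₃.getVert a₃))
      (Sum.inr s(P₃.getVert (a₃-1), P₃.getVert a₃))
      trivial
      (show s(P₃.getVert (a₃-1), P₃.getVert a₃) ∈ G.edgeSet by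
        have h' := P₃.adj_getVert_succ (i := a₃ - 1) (by omega)
        have hidx : a₃ - 1 + 1 = a₃ := by omega
        rw [hidx] at h'
        exact G.mem_edgeSet.mpr h')
      (by simp)
    simp only [Set.mem_insert_iff, Set.mem_singleton_iff] at hs
    apply hne
    simp only [mdist, edist, Sum.elim_inl, Sum.elim_inr, Sym2.lift_mk]
    rcases hs with rfl | rfl | rfl
    · rw [D13 (a₃-1) (by omega), D13 a₃ (by omega)]
      omega
    · rw [D23 (a₃-1) (by omega), D23 a₃ (by omega)]
      omega
    · rw [SimpleGraph.dist_self]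
      simp
  

end ThetaMixed

namespace ThetaMixed

open SimpleGraph

/-- In a balanced Theta graph, a set consisting of precisely one internal vertex of
each of the three `u`–`v` paths is not a mixed metric generator. -/
theorem not_generator_of_internal_triple {V : Type*} (G : SimpleGraph V)
    (u v : V) (P₁ P₂ P₃ : G.Walk u v) (hT : IsThetaDecomp G u v P₁ P₂ P₃)
    (hbal : Balanced3 P₁.length P₂.length P₃.length)
    (s₁ s₂ s₃ : V)
    (h₁ : s₁ ∈ P₁.support) (h₁u : s₁ ≠ u) (h₁v : s₁ ≠ v)
    (h₂ : s₂ ∈ P₂.support) (h₂u : s₂ ≠ u) (h₂v : s₂ ≠ v)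
    (h₃ : s₃ ∈ P₃.support) (h₃u : s₃ ≠ u) (h₃v : s₃ ≠ v) :
    ¬ IsMixedGenerator G {s₁, s₂, s₃} := by
  obtain ⟨a₁, e₁, hl₁⟩ := SimpleGraph.Walk.mem_support_iff_exists_getVert.mp h₁
  obtain ⟨a₂, e₂, hl₂⟩ := SimpleGraph.Walk.mem_support_iff_exists_getVert.mp h₂
  obtain ⟨a₃, e₃, hl₃⟩ := SimpleGraph.Walk.mem_support_iff_exists_getVert.mp h₃
  have h1l : 1 ≤ a₁ := by
    rcases Nat.eq_zero_or_pos a₁ with h | h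
    · exact absurd (by rw [← e₁, h, Walk.getVert_zero]) h₁u
    · exact h
  have h1r : a₁ + 1 ≤ P₁.length := by
    rcases Nat.lt_or_ge a₁ P₁.length with h | h
    · omega
    · exact absurd (by rw [← e₁, show a₁ = P₁.length by omega, Walk.getVert_length]) h₁v
  have h2l : 1 ≤ a₂ := by
    rcases Nat.eq_zero_or_pos a₂ with h | h
    · exact absurd (by rw [← e₂, h, Walk.getVert_zero]) h₂u
    · exact h
  have h2r : a₂ + 1 ≤ P₂.length := by
    rcases Nat.lt_or_ge a₂ P₂.length with h | h
    · omega
    · exact absurd (by rw [← e₂, show a₂ = P₂.length by omega, Walk.getVert_length]) h₂v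
  have h3l : 1 ≤ a₃ := by
    rcases Nat.eq_zero_or_pos a₃ with h | h
    · exact absurd (by rw [← e₃, h, Walk.getVert_zero]) h₃u
    · exact h
  have h3r : a₃ + 1 ≤ P₃.length := by
    rcases Nat.lt_or_ge a₃ P₃.length with h | h
    · omega
    · exact absurd (by rw [← e₃, show a₃ = P₃.length by omega, Walk.getVert_length]) h₃v
  rcases le_total (2*a₁ + P₂.length) (2*a₂ + P₁.length) with h12 | h12
  · rcases le_total (2*a₂ + P₃.length) (2*a₃ + P₂.length) with h23 | h23
    · exact main_sorted hT hbal e₁ e₂ e₃ h1l h1r h2l h2r h3l h3r h12 h23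
    · rcases le_total (2*a₁ + P₃.length) (2*a₃ + P₁.length) with h13 | h13
      · rw [show ({s₁, s₂, s₃} : Set V) = {s₁, s₃, s₂} by ext w; simp; tauto]
        exact main_sorted hT.swap23 hbal.swap23 e₁ e₃ e₂
          h1l h1r h3l h3r h2l h2r h13 (by omega)
      · rw [show ({s₁, s₂, s₃} : Set V) = {s₃, s₁, s₂} by ext w; simp; tauto]
        exact main_sorted (hT.swap23).swap12 (hbal.swap23).swap12 e₃ e₁ e₂
          h3l h3r h1l h1r h2l h2r (by omega) h12
  · rcases le_total (2*a₂ + P₃.length) (2*a₃ + P₂.length) with h23 | h23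
    · rcases le_total (2*a₁ + P₃.length) (2*a₃ + P₁.length) with h13 | h13
      · rw [show ({s₁, s₂, s₃} : Set V) = {s₂, s₁, s₃} by ext w; simp; tauto]
        exact main_sorted hT.swap12 hbal.swap12 e₂ e₁ e₃
          h2l h2r h1l h1r h3l h3r h12 h13
      · rw [show ({s₁, s₂, s₃} : Set V) = {s₂, s₃, s₁} by ext w; simp; tauto]
        exact main_sorted (hT.swap12).swap23 (hbal.swap12).swap23 e₂ e₃ e₁
          h2l h2r h3l h3r h1l h1r h23 (by omega)
    · rw [show ({s₁, s₂, s₃} : Set V) = {s₃, s₂, s₁} by ext w; simp; tauto]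
      exact main_sorted ((hT.swap12).swap23).swap12 ((hbal.swap12).swap23).swap12 e₃ e₂ e₁
        h3l h3r h2l h2r h1l h1r h23 h12

end ThetaMixed
end

section
/- In an unbalanced Theta graph G, no set S of vertices with |S| = 2 is a mixed metric generator. -/
namespace ThetaMixed

open SimpleGraph

/-- Key lemma: if `{a, b}` is a mixed generator and `u ~ x`, then the edge
`s(u,x)` must be distinguished from each of its endpoints, which forces the
distances from `a` and from `b` to change in opposite directions along the
edge. -/
lemma key {V : Type*} (G : SimpleGraph V) (hconn : G.Connected) {a b u x : V}
    (hgen : IsMixedGenerator G {a, b}) (hadj : G.Adj u x) :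
    (G.dist a x = G.dist a u + 1 ∧ G.dist b u = G.dist b x + 1) ∨
    (G.dist a u = G.dist a x + 1 ∧ G.dist b x = G.dist b u + 1) := by
  have he : s(u, x) ∈ G.edgeSet := hadj
  have hb1 : G.dist a x ≤ G.dist a u + 1 := by
    calc G.dist a x ≤ G.dist a u + G.dist u x := hconn.dist_triangle
    _ ≤ G.dist a u + 1 := by rw [dist_eq_one_iff_adj.2 hadj]
  have hb2 : G.dist a u ≤ G.dist a x + 1 := by
    calc G.dist a u ≤ G.dist a x + G.dist x u := hconn.dist_triangle
    _ ≤ G.dist a x + 1 := by rw [dist_eq_one_iff_adj.2 hadj.symm]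
  have hb3 : G.dist b x ≤ G.dist b u + 1 := by
    calc G.dist b x ≤ G.dist b u + G.dist u x := hconn.dist_triangle
    _ ≤ G.dist b u + 1 := by rw [dist_eq_one_iff_adj.2 hadj]
  have hb4 : G.dist b u ≤ G.dist b x + 1 := by
    calc G.dist b u ≤ G.dist b x + G.dist x u := hconn.dist_triangle
    _ ≤ G.dist b x + 1 := by rw [dist_eq_one_iff_adj.2 hadj.symm]
  obtain ⟨s, hs, hds⟩ := hgen (Sum.inr s(u, x)) (Sum.inl x) he trivial (by simp)
  obtain ⟨t, ht, hdt⟩ := hgen (Sum.inr s(u, x)) (Sum.inl u) he trivial (by simp)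
  simp only [mdist, Sum.elim_inr, Sum.elim_inl, edist, Sym2.lift_mk] at hds hdt
  have hs' : G.dist s u < G.dist s x := by
    rcases lt_or_ge (G.dist s u) (G.dist s x) with h | h
    · exact h
    · exact absurd (min_eq_right h) hds
  have ht' : G.dist t x < G.dist t u := by
    rcases lt_or_ge (G.dist t x) (G.dist t u) with h | h
    · exact h
    · exact absurd (by rw [min_eq_left h]) hdt
  have hst : s ≠ t := fun hE => by subst hE; omega
  rcases hs with rfl | rfl
  · rcases ht with rfl | rfl
    · exact absurd rfl hst
    · left; omega
  · rcases ht with rfl | rfl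
    · right; omega
    · exact absurd rfl hst

/-- If `G` is connected and has a vertex with three distinct neighbours, then
no two-element set is a mixed metric generator. -/
lemma no_two_generator_of_three_neighbors {V : Type*} (G : SimpleGraph V)
    (hconn : G.Connected) {u x₁ x₂ x₃ : V}
    (h1 : G.Adj u x₁) (h2 : G.Adj u x₂) (h3 : G.Adj u x₃)
    (h12 : x₁ ≠ x₂) (h13 : x₁ ≠ x₃) (h23 : x₂ ≠ x₃) :
    ∀ S : Finset V, S.card = 2 → ¬ IsMixedGenerator G ↑S := by
  classical
  intro S hS hgen
  obtain ⟨a, b, hab, rfl⟩ := Finset.card_eq_two.1 hS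
  have hgen' : IsMixedGenerator G {a, b} := by
    have : ((({a, b} : Finset V) : Set V)) = {a, b} := by simp
    rwa [this] at hgen
  have k1 := key G hconn hgen' h1
  have k2 := key G hconn hgen' h2
  have k3 := key G hconn hgen' h3
  have same : ∀ y z : V, y ≠ z → G.dist a y = G.dist a z → G.dist b y = G.dist b z → False := by
    intro y z hyz hay hby
    obtain ⟨s, hs, hds⟩ := hgen' (Sum.inl y) (Sum.inl z) trivial trivial (by simp [hyz])
    simp only [mdist, Sum.elim_inl] at hds
    rcases hs with rfl | rfl <;> exact hds (by omega)
  rcases k1 with ⟨p1, q1⟩ | ⟨p1, q1⟩ <;> rcases k2 with ⟨p2, q2⟩ | ⟨p2, q2⟩ <;>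
    rcases k3 with ⟨p3, q3⟩ | ⟨p3, q3⟩
  · exact same _ _ h12 (by omega) (by omega)
  · exact same _ _ h12 (by omega) (by omega)
  · exact same _ _ h13 (by omega) (by omega)
  · exact same _ _ h23 (by omega) (by omega)
  · exact same _ _ h23 (by omega) (by omega)
  · exact same _ _ h13 (by omega) (by omega)
  · exact same _ _ h12 (by omega) (by omega)
  · exact same _ _ h12 (by omega) (by omega)

/-- In an unbalanced Theta graph, no set of two vertices is a mixed metric
generator. -/
theorem unbalanced_theta_no_two_generator {V : Type*} (G : SimpleGraph V)
    (h : IsUnbalancedTheta G) :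
    ∀ S : Finset V, S.card = 2 → ¬ IsMixedGenerator G ↑S := by
  classical
  obtain ⟨⟨u, v, P₁, P₂, P₃, hd⟩, -⟩ := h
  -- `G` is connected
  have reach : ∀ w : V, G.Reachable u w := by
    intro w
    rcases hd.coverV w with h1 | h1 | h1
    · exact (P₁.takeUntil w h1).reachable
    · exact (P₂.takeUntil w h1).reachable
    · exact (P₃.takeUntil w h1).reachable
  have hconn : G.Connected := by
    rw [connected_iff]
    exact ⟨fun w w' => (reach w).symm.trans (reach w'), ⟨u⟩⟩
  -- extract the first edges of the three paths
  obtain ⟨x₁, hadj₁, q₁, hq₁⟩ := (Walk.not_nil_iff).1 (Walk.not_nil_of_ne hd.ne (p := P₁))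
  obtain ⟨x₂, hadj₂, q₂, hq₂⟩ := (Walk.not_nil_iff).1 (Walk.not_nil_of_ne hd.ne (p := P₂))
  obtain ⟨x₃, hadj₃, q₃, hq₃⟩ := (Walk.not_nil_iff).1 (Walk.not_nil_of_ne hd.ne (p := P₃))
  have he₁ : s(u, x₁) ∈ P₁.edges := by rw [hq₁]; simp
  have he₂ : s(u, x₂) ∈ P₂.edges := by rw [hq₂]; simp
  have he₃ : s(u, x₃) ∈ P₃.edges := by rw [hq₃]; simp
  have h12 : x₁ ≠ x₂ := by
    rintro rfl
    exact hd.edgeDisj₁₂ _ he₁ he₂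
  have h13 : x₁ ≠ x₃ := by
    rintro rfl
    exact hd.edgeDisj₁₃ _ he₁ he₃
  have h23 : x₂ ≠ x₃ := by
    rintro rfl
    exact hd.edgeDisj₂₃ _ he₂ he₃
  exact no_two_generator_of_three_neighbors G hconn hadj₁ hadj₂ hadj₃ h12 h13 h23

end ThetaMixed
end

section
/- Let G be a connected graph and let s₁, s₂ be two vertices of G such that s₁ has degree 2 with neighbors w and z. Then the set {s₁, s₂} fails to distinguish either the two edges s₁w and s₁z (when d(w,s₂) = d(z,s₂)) or the vertex s₁ and one of its incident edges (when d(w,s₂) ≠ d(z,s₂)). Hence, in a Theta graph, no 2-element set containing such a degree-2 vertex, with its two elements on distinct paths, is a mixed metric generator. -/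
namespace ThetaMixed

open SimpleGraph

/-- If `s₁` has degree 2 with neighbors `w, z`, then `{s₁, s₂}` fails to distinguish
either the two edges `s₁w` and `s₁z` (when `d(w,s₂) = d(z,s₂)`), or the vertex `s₁`
and one of its incident edges (when `d(w,s₂) ≠ d(z,s₂)`). Hence `{s₁, s₂}` is not a
mixed metric generator. -/
theorem two_set_fails_at_degree_two {V : Type*} (G : SimpleGraph V)
    (hG : G.Connected) (s₁ s₂ w z : V) (hwz : w ≠ z)
    (hw : G.Adj s₁ w) (hz : G.Adj s₁ z)
    (hdeg : G.neighborSet s₁ = {w, z}) :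
    ((G.dist w s₂ = G.dist z s₂ →
       ∀ s ∈ ({s₁, s₂} : Set V), edist G s s(s₁, w) = edist G s s(s₁, z)) ∧
     (G.dist w s₂ ≠ G.dist z s₂ →
       ∃ y, G.Adj s₁ y ∧ ∀ s ∈ ({s₁, s₂} : Set V), G.dist s s₁ = edist G s s(s₁, y))) ∧
    ¬ IsMixedGenerator G {s₁, s₂} := by
  have hedist : ∀ (s a b : V), edist G s s(a, b) = min (G.dist s a) (G.dist s b) := by
    intro s a b; rfl
  have key1 : G.dist w s₂ = G.dist z s₂ →
      ∀ s ∈ ({s₁, s₂} : Set V), edist G s s(s₁, w) = edist G s s(s₁, z) := by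
    intro h s hs
    rw [hedist, hedist]
    rcases hs with rfl | rfl
    · simp [G.dist_self]
    · rw [dist_comm (G := G) (u := s) (v := w), dist_comm (G := G) (u := s) (v := z), h]
  have key2 : G.dist w s₂ ≠ G.dist z s₂ →
      ∃ y, G.Adj s₁ y ∧ ∀ s ∈ ({s₁, s₂} : Set V), G.dist s s₁ = edist G s s(s₁, y) := by
    intro h
    have main : ∀ a b : V, G.Adj s₁ a → G.Adj s₁ b → G.dist a s₂ < G.dist b s₂ →
        ∀ s ∈ ({s₁, s₂} : Set V), G.dist s s₁ = edist G s s(s₁, b) := by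
      intro a b ha hb hab s hs
      rw [hedist]
      rcases hs with rfl | rfl
      · simp [G.dist_self]
      · have h1 : G.dist s s₁ ≤ G.dist s a + G.dist a s₁ := hG.dist_triangle
        have h2 : G.dist a s₁ = 1 := dist_eq_one_iff_adj.2 ha.symm
        have h3 : G.dist s a = G.dist a s := dist_comm
        have h4 : G.dist s b = G.dist b s := dist_comm
        have hle : G.dist s s₁ ≤ G.dist s b := by omega
        exact (min_eq_left hle).symm
    rcases lt_or_gt_of_ne h with hlt | hlt
    · exact ⟨z, hz, main w z hw hz hlt⟩
    · exact ⟨w, hw, main z w hz hw hlt⟩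
  refine ⟨⟨key1, key2⟩, ?_⟩
  intro hgen
  by_cases h : G.dist w s₂ = G.dist z s₂
  · obtain ⟨s, hs, hne⟩ := hgen (Sum.inr s(s₁, w)) (Sum.inr s(s₁, z))
      (G.mem_edgeSet.2 hw) (G.mem_edgeSet.2 hz)
      (by
        intro heq
        have := Sum.inr.inj heq
        rw [Sym2.eq_iff] at this
        rcases this with ⟨_, rfl⟩ | ⟨h1, _⟩
        · exact hwz rfl
        · exact hz.ne h1)
    exact hne (key1 h s hs)
  · obtain ⟨y, hy, hall⟩ := key2 h
    obtain ⟨s, hs, hne⟩ := hgen (Sum.inl s₁) (Sum.inr s(s₁, y))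
      trivial (G.mem_edgeSet.2 hy) (by simp)
    exact hne (hall s hs)

end ThetaMixed
end
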